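/- Let z ∈ ℝ^D with D ≥ 2 and γ > 0. Then the average over the unit sphere S_D = {v ∈ ℝ^D : ‖v‖ = 1} (with respect to the normalized surface measure σ_D) of the one-dimensional Gaussian density N(vᵀz, γ) evaluated at 0 equals (2πγ)^{-1/2} · φ_D(‖z‖²/(2γ)), where φ_D(s) = ₁F₁(1/2; D/2; −s). -/

import Mathlib

/-!
Expanding the exponential in its power series, which converges uniformly on the sphere, reduces
the claim to the even moments of `⟪v, z⟫` under the uniform measure. These come from computing
`∫ ⟪x, z⟫ ^ (2k) * exp (-‖x‖² / 2) dx` over `ℝ^D` in two ways: in polar coordinates it is the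
sphere moment times `∫₀^∞ r ^ (D - 1 + 2k) * exp (-r² / 2) dr`, while rotating `z` onto a coordinate
axis and applying Fubini gives `‖z‖ ^ (2k)` times a one-dimensional Gaussian moment. Both radial
integrals are Gamma values, and `Γ(x + k) = (x)ₖ Γ(x)` turns their ratio into
`‖z‖ ^ (2k) * (1/2)ₖ / (D/2)ₖ`, the coefficients of `₁F₁(1/2; D/2; ·)`.
-/

open MeasureTheory Real Filter
open scoped RealInnerProductSpace BigOperators

/-- One-dimensional Gaussian density with mean `m` and variance `S`. -/
noncomputable def gaussDen (m S x : ℝ) : ℝ :=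
  (Real.sqrt (2 * Real.pi * S))⁻¹ * Real.exp (-(x - m) ^ 2 / (2 * S))

/-- Kummer's confluent hypergeometric function `₁F₁(a;b;z)`. -/
noncomputable def kummerM (a b z : ℝ) : ℝ :=
  ∑' k : ℕ, ((ascPochhammer ℝ k).eval a / (ascPochhammer ℝ k).eval b) * z ^ k / (Nat.factorial k : ℝ)

/-- `φ_D(s) = ₁F₁(1/2; D/2; −s)`. -/
noncomputable def phiD (D : ℕ) (s : ℝ) : ℝ := kummerM (1 / 2) ((D : ℝ) / 2) (-s)

/-- Normalized (probability) surface measure on the unit sphere in `ℝ^D`. -/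
noncomputable def sphereUniform (D : ℕ) :
    Measure (Metric.sphere (0 : EuclideanSpace ℝ (Fin D)) 1) :=
  (((volume : Measure (EuclideanSpace ℝ (Fin D))).toSphere Set.univ)⁻¹) •
    (volume : Measure (EuclideanSpace ℝ (Fin D))).toSphere

/-- Total surface volume of the unit sphere in `ℝ^K`. -/
noncomputable def sphereVol (K : ℕ) : ℝ :=
  ((volume : Measure (EuclideanSpace ℝ (Fin K))).toSphere Set.univ).toReal

section

open Set

theorem Real.Gamma_add_nat_eq_ascPochhammer_mul {x : ℝ} (hx : 0 < x) (k : ℕ) :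
    Gamma (x + k) = (ascPochhammer ℝ k).eval x * Gamma x := by
  induction k with
  | zero => simp
  | succ k ih =>
    rw [Nat.cast_succ, ← add_assoc, Gamma_add_one (by positivity), ih, ascPochhammer_succ_eval]
    ring

theorem integral_Ioi_pow_mul_exp_neg_sq_div_two (n : ℕ) :
    ∫ r in Ioi (0 : ℝ), r ^ n * exp (-r ^ 2 / 2) =
      2 ^ (((n : ℝ) - 1) / 2) * Gamma ((n + 1) / 2) := by
  have h := integral_rpow_mul_exp_neg_mul_rpow (p := 2) (q := n) (b := 1 / 2) two_pos
    (by linarith [n.cast_nonneg (α := ℝ)]) (by norm_num)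
  have hpow : ((1 : ℝ) / 2) ^ (-((n : ℝ) + 1) / 2) = 2 ^ (((n : ℝ) + 1) / 2) := by
    rw [one_div, inv_rpow zero_le_two, ← rpow_neg zero_le_two]
    ring_nf
  have hexp (r : ℝ) : -(1 / 2) * r ^ 2 = -r ^ 2 / 2 := by ring
  simp only [rpow_natCast, rpow_two, hpow, hexp] at h
  rw [h, show ((n : ℝ) - 1) / 2 = ((n : ℝ) + 1) / 2 - 1 by ring, rpow_sub_one two_ne_zero]
  ring

theorem integral_Ioi_pow_add_two_mul_mul_exp_neg_sq_div_two (n k : ℕ) :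
    ∫ r in Ioi (0 : ℝ), r ^ (n + 2 * k) * exp (-r ^ 2 / 2) =
      2 ^ k * (ascPochhammer ℝ k).eval (((n : ℝ) + 1) / 2) *
        ∫ r in Ioi (0 : ℝ), r ^ n * exp (-r ^ 2 / 2) := by
  rw [integral_Ioi_pow_mul_exp_neg_sq_div_two, integral_Ioi_pow_mul_exp_neg_sq_div_two,
    show ((n + 2 * k : ℕ) + 1 : ℝ) / 2 = (n + 1) / 2 + k by push_cast; ring,
    Gamma_add_nat_eq_ascPochhammer_mul (by positivity),
    show ((n + 2 * k : ℕ) - 1 : ℝ) / 2 = k + (n - 1) / 2 by push_cast; ring,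
    rpow_add two_pos, rpow_natCast]
  ring

theorem integral_Ioi_pow_mul_exp_neg_sq_div_two_pos (n : ℕ) :
    0 < ∫ r in Ioi (0 : ℝ), r ^ n * exp (-r ^ 2 / 2) := by
  rw [integral_Ioi_pow_mul_exp_neg_sq_div_two]
  exact mul_pos (rpow_pos_of_pos two_pos _) (Gamma_pos_of_pos (by positivity))

theorem integral_pow_two_mul_mul_exp_neg_sq_div_two (k : ℕ) :
    ∫ t : ℝ, t ^ (2 * k) * exp (-t ^ 2 / 2) =
      2 * ∫ r in Ioi (0 : ℝ), r ^ (2 * k) * exp (-r ^ 2 / 2) := by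
  rw [← integral_comp_abs (f := fun t => t ^ (2 * k) * exp (-t ^ 2 / 2))]
  simp only [pow_mul, sq_abs]

theorem integral_comp_inner_norm_of_norm_eq {E : Type*} [NormedAddCommGroup E]
    [InnerProductSpace ℝ E] [FiniteDimensional ℝ E] [MeasurableSpace E] [BorelSpace E]
    (f : ℝ → ℝ → ℝ) {e e' : E} (h : ‖e‖ = ‖e'‖) :
    ∫ x, f ⟪x, e⟫ ‖x‖ = ∫ x, f ⟪x, e'⟫ ‖x‖ := by
  set ρ := Submodule.reflection (ℝ ∙ (e' - e))ᗮ
  have hρ : ρ e' = e := Submodule.reflection_sub h.symm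
  rw [← ρ.measurePreserving.integral_comp ρ.toHomeomorph.measurableEmbedding]
  simp_rw [← hρ, ρ.inner_map_map, ρ.norm_map]

theorem EuclideanSpace.integral_comp_apply_mul_exp_neg_norm_sq_div_two {ι : Type*}
    [Fintype ι] [DecidableEq ι] (f : ℝ → ℝ) (i : ι) :
    ∫ x : EuclideanSpace ℝ ι, f (x i) * exp (-‖x‖ ^ 2 / 2) =
      (∫ t, f t * exp (-t ^ 2 / 2)) * (∫ t : ℝ, exp (-t ^ 2 / 2)) ^ (Fintype.card ι - 1) := by
  have hprod (y : ι → ℝ) : f (y i) * exp (-‖WithLp.toLp 2 y‖ ^ 2 / 2) =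
      ∏ j, (if j = i then f (y j) else 1) * exp (-y j ^ 2 / 2) := by
    rw [Finset.prod_mul_distrib, ← exp_sum, Finset.prod_ite_eq' Finset.univ i,
      EuclideanSpace.norm_sq_eq, ← Finset.sum_div, ← Finset.sum_neg_distrib]
    simp
  rw [← (PiLp.volume_preserving_toLp ι).integral_comp
    (MeasurableEquiv.toLp 2 (ι → ℝ)).measurableEmbedding]
  simp only [hprod]
  rw [integral_fintype_prod_volume_eq_prod
      (fun j t => (if j = i then f t else 1) * exp (-t ^ 2 / 2)),
    ← Finset.mul_prod_erase _ _ (Finset.mem_univ i)]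
  simp only [↓reduceIte]
  rw [Finset.prod_congr (g := fun _ => ∫ t : ℝ, exp (-t ^ 2 / 2)) rfl fun j hj => by
      simp only [if_neg (Finset.ne_of_mem_erase hj), one_mul],
    Finset.prod_const, Finset.card_erase_of_mem (Finset.mem_univ i), Finset.card_univ]

theorem integral_inner_pow_mul_exp_neg_norm_sq_div_two {ι : Type*} [Fintype ι] [Nonempty ι]
    (z : EuclideanSpace ℝ ι) (n : ℕ) :
    ∫ x : EuclideanSpace ℝ ι, ⟪x, z⟫ ^ n * exp (-‖x‖ ^ 2 / 2) =
      ‖z‖ ^ n * (∫ t, t ^ n * exp (-t ^ 2 / 2)) *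
        (∫ t : ℝ, exp (-t ^ 2 / 2)) ^ (Fintype.card ι - 1) := by
  classical
  obtain ⟨i⟩ := ‹Nonempty ι›
  have hnorm : ‖z‖ = ‖‖z‖ • EuclideanSpace.single i (1 : ℝ)‖ := by
    rw [norm_smul, PiLp.norm_single, norm_one, mul_one, norm_norm]
  rw [integral_comp_inner_norm_of_norm_eq (fun a b => a ^ n * exp (-b ^ 2 / 2)) hnorm]
  simp only [real_inner_smul_right, EuclideanSpace.inner_single_right, one_mul, conj_trivial]
  rw [EuclideanSpace.integral_comp_apply_mul_exp_neg_norm_sq_div_two (fun t => (‖z‖ * t) ^ n),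
    ← integral_const_mul]
  simp only [mul_pow, mul_assoc]

theorem integral_fun_sphere_mul_fun_norm_addHaar {E : Type*} [NormedAddCommGroup E]
    [NormedSpace ℝ E] [FiniteDimensional ℝ E] [MeasurableSpace E] [BorelSpace E] [Nontrivial E]
    (μ : Measure E) [μ.IsAddHaarMeasure] (f : E → ℝ) (g : ℝ → ℝ) :
    ∫ x, f (‖x‖⁻¹ • x) * g ‖x‖ ∂μ =
      (∫ v : Metric.sphere (0 : E) 1, f v ∂μ.toSphere) *
        ∫ r in Ioi (0 : ℝ), r ^ (Module.finrank ℝ E - 1) * g r :=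
  calc ∫ x, f (‖x‖⁻¹ • x) * g ‖x‖ ∂μ
      = ∫ x : ({0}ᶜ : Set E), f (‖x.1‖⁻¹ • x.1) * g ‖x.1‖ ∂(μ.comap (↑)) := by
        rw [integral_subtype_comap (measurableSet_singleton _).compl
          fun x => f (‖x‖⁻¹ • x) * g ‖x‖, restrict_compl_singleton]
    _ = ∫ p, f p.1 * g p.2 ∂μ.toSphere.prod (.volumeIoiPow (Module.finrank ℝ E - 1)) := by
        simpa using μ.measurePreserving_homeomorphUnitSphereProd.integral_comp
          (Homeomorph.measurableEmbedding _) fun p => f p.1 * g p.2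
    _ = _ := by
        rw [integral_prod_mul (L := ℝ) (fun v : Metric.sphere (0 : E) 1 => f v)
          (fun r : Ioi (0 : ℝ) => g r)]
        congr 1
        simp only [Measure.volumeIoiPow, ENNReal.ofReal]
        rw [integral_withDensity_eq_integral_smul
            (measurable_subtype_coe.pow_const _).real_toNNReal,
          integral_subtype_comap measurableSet_Ioi fun r => Real.toNNReal (r ^ _) • g r]
        refine setIntegral_congr_fun measurableSet_Ioi fun r hr => ?_
        rw [NNReal.smul_def, Real.coe_toNNReal _ (pow_nonneg hr.out.le _), smul_eq_mul]

theorem integral_toSphere_inner_pow_mul_integral_Ioi {ι : Type*} [Fintype ι] [Nonempty ι]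
    (z : EuclideanSpace ℝ ι) (m : ℕ) :
    (∫ v : Metric.sphere (0 : EuclideanSpace ℝ ι) 1, ⟪(v : EuclideanSpace ℝ ι), z⟫ ^ m
        ∂(volume : Measure (EuclideanSpace ℝ ι)).toSphere) *
        ∫ r in Ioi (0 : ℝ), r ^ (Fintype.card ι - 1 + m) * exp (-r ^ 2 / 2) =
      ‖z‖ ^ m * (∫ t, t ^ m * exp (-t ^ 2 / 2)) *
        (∫ t : ℝ, exp (-t ^ 2 / 2)) ^ (Fintype.card ι - 1) := by
  have hinner (x : EuclideanSpace ℝ ι) : ⟪x, z⟫ = ‖x‖ * ⟪‖x‖⁻¹ • x, z⟫ := by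
    rcases eq_or_ne x 0 with rfl | hx
    · simp
    · rw [real_inner_smul_left, mul_inv_cancel_left₀ (norm_ne_zero_iff.mpr hx)]
  rw [← integral_inner_pow_mul_exp_neg_norm_sq_div_two]
  have := integral_fun_sphere_mul_fun_norm_addHaar (volume : Measure (EuclideanSpace ℝ ι))
    (fun v => ⟪v, z⟫ ^ m) (fun r => r ^ m * exp (-r ^ 2 / 2))
  simp only [finrank_euclideanSpace, ← mul_assoc, ← pow_add] at this
  rw [← this]
  congr 1 with x
  rw [hinner x, mul_pow, mul_comm (‖x‖ ^ m)]

theorem integral_toSphere_inner_pow_two_mul {ι : Type*} [Fintype ι] [Nonempty ι]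
    (z : EuclideanSpace ℝ ι) (k : ℕ) :
    ∫ v : Metric.sphere (0 : EuclideanSpace ℝ ι) 1, ⟪(v : EuclideanSpace ℝ ι), z⟫ ^ (2 * k)
        ∂(volume : Measure (EuclideanSpace ℝ ι)).toSphere =
      ‖z‖ ^ (2 * k) * ((ascPochhammer ℝ k).eval (1 / 2) /
        (ascPochhammer ℝ k).eval ((Fintype.card ι : ℝ) / 2)) *
        (volume : Measure (EuclideanSpace ℝ ι)).toSphere.real univ := by
  have hcard : (((Fintype.card ι - 1 : ℕ) : ℝ) + 1) / 2 = (Fintype.card ι : ℝ) / 2 := by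
    rw [Nat.cast_sub Fintype.card_pos, Nat.cast_one, sub_add_cancel]
  -- the case `m = 0` expresses the total surface area through the same radial integrals
  have hvol := integral_toSphere_inner_pow_mul_integral_Ioi z 0
  have hmoment := integral_toSphere_inner_pow_mul_integral_Ioi z (2 * k)
  have heven := integral_Ioi_pow_add_two_mul_mul_exp_neg_sq_div_two 0 k
  have hgauss := integral_pow_two_mul_mul_exp_neg_sq_div_two 0
  rw [integral_Ioi_pow_add_two_mul_mul_exp_neg_sq_div_two, hcard,
    integral_pow_two_mul_mul_exp_neg_sq_div_two] at hmoment
  simp only [mul_zero, pow_zero, one_mul, add_zero, integral_const, smul_eq_mul, mul_one]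
    at hvol hgauss
  simp only [zero_add, CharP.cast_eq_zero, pow_zero, one_mul] at heven
  rw [heven] at hmoment
  have hR := integral_Ioi_pow_mul_exp_neg_sq_div_two_pos (Fintype.card ι - 1)
  have hb : 0 < (ascPochhammer ℝ k).eval ((Fintype.card ι : ℝ) / 2) :=
    ascPochhammer_pos k _ (by positivity)
  rw [mul_div_assoc', div_mul_eq_mul_div, eq_div_iff hb.ne']
  refine mul_right_cancel₀ (mul_ne_zero (pow_ne_zero k two_ne_zero) hR.ne') ?_
  linear_combination hmoment - ‖z‖ ^ (2 * k) * (ascPochhammer ℝ k).eval (1 / 2) * 2 ^ k * hvol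
    - ‖z‖ ^ (2 * k) * (ascPochhammer ℝ k).eval (1 / 2) * 2 ^ k *
      (∫ t : ℝ, exp (-t ^ 2 / 2)) ^ (Fintype.card ι - 1) * hgauss

instance MeasureTheory.Measure.neZero_toSphere {E : Type*} [NormedAddCommGroup E] [NormedSpace ℝ E]
    [FiniteDimensional ℝ E] [MeasurableSpace E] [BorelSpace E] [Nontrivial E] (μ : Measure E)
    [μ.IsAddHaarMeasure] : NeZero μ.toSphere :=
  ⟨μ.toSphere_ne_zero⟩

theorem isProbabilityMeasure_sphereUniform {D : ℕ} (hD : 0 < D) :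
    IsProbabilityMeasure (sphereUniform D) :=
  have : Nonempty (Fin D) := ⟨⟨0, hD⟩⟩
  isProbabilityMeasureSMul

theorem integral_sphereUniform_inner_pow_two_mul {D : ℕ} (hD : 0 < D)
    (z : EuclideanSpace ℝ (Fin D)) (k : ℕ) :
    ∫ v, ⟪(v : EuclideanSpace ℝ (Fin D)), z⟫ ^ (2 * k) ∂sphereUniform D =
      ‖z‖ ^ (2 * k) * ((ascPochhammer ℝ k).eval (1 / 2) /
        (ascPochhammer ℝ k).eval ((D : ℝ) / 2)) := by
  have : Nonempty (Fin D) := ⟨⟨0, hD⟩⟩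
  rw [sphereUniform, integral_smul_measure, integral_toSphere_inner_pow_two_mul, Fintype.card_fin,
    ENNReal.toReal_inv, ← measureReal_def, smul_eq_mul, mul_comm, mul_assoc,
    mul_inv_cancel₀ measureReal_univ_ne_zero, mul_one]

theorem integral_exp_eq_tsum_integral_pow_div_factorial {α : Type*} [MeasurableSpace α]
    {μ : Measure α} [IsFiniteMeasure μ] {h : α → ℝ} (hh : AEStronglyMeasurable h μ) {C : ℝ}
    (hC : ∀ x, |h x| ≤ C) :
    ∫ x, exp (h x) ∂μ = ∑' n, (∫ x, h x ^ n ∂μ) / n.factorial := by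
  have hbound (n : ℕ) (x : α) : ‖h x ^ n / n.factorial‖ ≤ C ^ n / n.factorial := by
    rw [norm_div, norm_pow, Real.norm_eq_abs, RCLike.norm_natCast]
    exact div_le_div_of_nonneg_right (pow_le_pow_left₀ (abs_nonneg _) (hC x) n) (Nat.cast_nonneg _)
  have hint (n : ℕ) : Integrable (fun x => h x ^ n / n.factorial) μ :=
    .of_bound (by fun_prop) _ (.of_forall (hbound n))
  have hsum : Summable fun n : ℕ => ∫ x, ‖h x ^ n / n.factorial‖ ∂μ := by
    refine .of_nonneg_of_le (fun n => integral_nonneg fun x => norm_nonneg _) (fun n => ?_)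
      ((Real.summable_pow_div_factorial C).mul_right (μ.real Set.univ))
    refine (Real.le_norm_self _).trans (norm_integral_le_of_norm_le_const (.of_forall fun x => ?_))
    rw [norm_norm]
    exact hbound n x
  calc ∫ x, exp (h x) ∂μ = ∫ x, ∑' n : ℕ, h x ^ n / n.factorial ∂μ := by
        simp_rw [exp_eq_exp_ℝ, NormedSpace.exp_eq_tsum_div]
    _ = ∑' n, (∫ x, h x ^ n ∂μ) / n.factorial := by
        rw [← integral_tsum_of_summable_integral_norm hint hsum]
        simp_rw [integral_div]

theorem integral_sphereUniform_exp_mul_inner_sq {D : ℕ} (hD : 0 < D)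
    (z : EuclideanSpace ℝ (Fin D)) (s : ℝ) :
    ∫ v, exp (s * ⟪(v : EuclideanSpace ℝ (Fin D)), z⟫ ^ 2) ∂sphereUniform D =
      kummerM (1 / 2) ((D : ℝ) / 2) (s * ‖z‖ ^ 2) := by
  have := isProbabilityMeasure_sphereUniform hD
  have hbound (v : Metric.sphere (0 : EuclideanSpace ℝ (Fin D)) 1) :
      |s * ⟪(v : EuclideanSpace ℝ (Fin D)), z⟫ ^ 2| ≤ |s| * ‖z‖ ^ 2 := by
    have hv := abs_real_inner_le_norm (v : EuclideanSpace ℝ (Fin D)) z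
    rw [norm_eq_of_mem_sphere, one_mul] at hv
    rw [abs_mul, abs_pow]
    gcongr
  rw [integral_exp_eq_tsum_integral_pow_div_factorial (by fun_prop) hbound, kummerM]
  congr with n
  simp_rw [mul_pow, ← pow_mul, integral_const_mul, integral_sphereUniform_inner_pow_two_mul hD]
  ring

end

theorem sphere_average_gauss_general (D : ℕ) (hD : 2 ≤ D) (z : EuclideanSpace ℝ (Fin D))
    (γ : ℝ) :
    ∫ v : Metric.sphere (0 : EuclideanSpace ℝ (Fin D)) 1,
        gaussDen ⟪(v : EuclideanSpace ℝ (Fin D)), z⟫ γ 0 ∂(sphereUniform D) =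
      (Real.sqrt (2 * Real.pi * γ))⁻¹ * phiD D (‖z‖ ^ 2 / (2 * γ)) := by
  have hexponent (t : ℝ) : -(0 - t) ^ 2 / (2 * γ) = -(2 * γ)⁻¹ * t ^ 2 := by ring
  have hargument : -(‖z‖ ^ 2 / (2 * γ)) = -(2 * γ)⁻¹ * ‖z‖ ^ 2 := by ring
  simp only [gaussDen, hexponent, integral_const_mul, phiD, hargument,
    integral_sphereUniform_exp_mul_inner_sq (by omega : 0 < D)]

theorem sphere_average_gauss (D : ℕ) (hD : 2 ≤ D) (z : EuclideanSpace ℝ (Fin D))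
    (γ : ℝ) (hγ : 0 < γ) :
    ∫ v : Metric.sphere (0 : EuclideanSpace ℝ (Fin D)) 1,
        gaussDen ⟪(v : EuclideanSpace ℝ (Fin D)), z⟫ γ 0 ∂(sphereUniform D) =
      (Real.sqrt (2 * Real.pi * γ))⁻¹ * phiD D (‖z‖ ^ 2 / (2 * γ)) :=
  sphere_average_gauss_general D hD z γ
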